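/- arXiv:1902.09895 — 3 statements merged into one kernel-verified Lean document; each statement's English description precedes it below -/
import Mathlib

section
/- Let (A, →, ⇝, 1) be a pseudo-BCI algebra and let x ∈ A. Then: (1) φ_x ∈ At(A); (2) φ_x → x ∈ K(A) and φ_x ⇝ x ∈ K(A); (3) if x ∈ K(A), then φ_x = 1. -/
/-- A pseudo-BCI algebra `(A, →, ⇝, 1)`: `ar` is `→`, `wa` is `⇝`, `one` is `1`. -/
structure PseudoBCI (A : Type*) where
  ar : A → A → A
  wa : A → A → A
  one : A
  ax1 : ∀ x y z, wa (ar x y) (wa (ar y z) (ar x z)) = one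
  ax2 : ∀ x y z, ar (wa x y) (ar (wa y z) (ar x z)) = one
  ax3 : ∀ x, ar one x = x
  ax4 : ∀ x, wa one x = x
  ax5 : ∀ x y, ar x y = one → ar y x = one → x = y

namespace PseudoBCI

variable {A : Type*}

/-- The order: `x ≤ y` iff `x → y = 1`. -/
def le (P : PseudoBCI A) (x y : A) : Prop := P.ar x y = P.one

/-- `x ∪₁ y = (x → y) ⇝ y`. -/
def cup1 (P : PseudoBCI A) (x y : A) : A := P.wa (P.ar x y) y

/-- `x ∪₂ y = (x ⇝ y) → y`. -/
def cup2 (P : PseudoBCI A) (x y : A) : A := P.ar (P.wa x y) y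

/-- `φ_x = (x → 1) ⇝ 1`. -/
def phi (P : PseudoBCI A) (x : A) : A := P.wa (P.ar x P.one) P.one

/-- `a` is an atom: `a ≤ x` implies `x = a`. -/
def IsAtom (P : PseudoBCI A) (a : A) : Prop := ∀ x, P.le a x → x = a

/-- `x ∈ K(A)` iff `x ≤ 1`. -/
def InK (P : PseudoBCI A) (x : A) : Prop := P.le x P.one

/-- Type I implicative derivation. -/
def IsIDerI (P : PseudoBCI A) (d : A → A) : Prop :=
  (∀ x y, d (P.ar x y) = P.cup2 (P.ar x (d y)) (P.ar (d x) y)) ∧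
  (∀ x y, d (P.wa x y) = P.cup1 (P.wa x (d y)) (P.wa (d x) y))

/-- Type II implicative derivation. -/
def IsIDerII (P : PseudoBCI A) (d : A → A) : Prop :=
  (∀ x y, d (P.ar x y) = P.cup2 (P.ar (d x) y) (P.ar x (d y))) ∧
  (∀ x y, d (P.wa x y) = P.cup1 (P.wa (d x) y) (P.wa x (d y)))

/-- Type I symmetric derivation. -/
def IsSDerI (P : PseudoBCI A) (d : A → A) : Prop :=
  (∀ x y, d (P.ar x y) = P.cup2 (P.ar x (d y)) (P.ar y (d x))) ∧
  (∀ x y, d (P.wa x y) = P.cup1 (P.wa x (d y)) (P.wa y (d x)))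

/-- Type II symmetric derivation. -/
def IsSDerII (P : PseudoBCI A) (d : A → A) : Prop :=
  (∀ x y, d (P.ar x y) = P.cup2 (P.ar (d x) y) (P.ar (d y) x)) ∧
  (∀ x y, d (P.wa x y) = P.cup1 (P.wa (d x) y) (P.wa (d y) x))

/-- Deductive system. -/
def IsDS (P : PseudoBCI A) (D : Set A) : Prop :=
  P.one ∈ D ∧ ∀ x y, x ∈ D → P.ar x y ∈ D → y ∈ D

/-- A is p-semisimple: `x ≤ 1` implies `x = 1`. -/
def PSemisimple (P : PseudoBCI A) : Prop := ∀ x, P.le x P.one → x = P.one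

end PseudoBCI

open PseudoBCI

namespace PseudoBCIAux

variable {A : Type*} (P : PseudoBCI A)

lemma h1 (y z : A) : P.wa y (P.wa (P.ar y z) z) = P.one := by
  have := P.ax1 P.one y z; rwa [P.ax3, P.ax3] at this

lemma h2 (y z : A) : P.ar y (P.ar (P.wa y z) z) = P.one := by
  have := P.ax2 P.one y z; rwa [P.ax4, P.ax3] at this

lemma refl_wa (x : A) : P.wa x x = P.one := by
  have := h1 P P.one x; rwa [P.ax3, P.ax4] at this

lemma refl_ar (x : A) : P.ar x x = P.one := by
  have := h2 P P.one x; rwa [P.ax4, P.ax3] at this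

variable {P}

lemma ord1 {x y : A} (h : P.ar x y = P.one) : P.wa x y = P.one := by
  have := h1 P x y; rwa [h, P.ax4] at this

lemma ord2 {x y : A} (h : P.wa x y = P.one) : P.ar x y = P.one := by
  have := h2 P x y; rwa [h, P.ax3] at this

lemma mono_ar {x y : A} (h : P.ar x y = P.one) (z : A) :
    P.wa (P.ar y z) (P.ar x z) = P.one := by
  have := P.ax1 x y z; rwa [h, P.ax4] at this

lemma le_trans {x y z : A} (hxy : P.ar x y = P.one) (hyz : P.ar y z = P.one) :
    P.ar x z = P.one := by
  have := mono_ar hxy z; rwa [hyz, P.ax4] at this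

/-- `x ⇝ y ≤ x → y`. -/
lemma wa_le_ar (P : PseudoBCI A) (x y : A) : P.ar (P.wa x y) (P.ar x y) = P.one := by
  have := P.ax2 x y y; rwa [refl_wa, P.ax3] at this

/-- `φ_x → 1 = x → 1`. -/
lemma m2 (P : PseudoBCI A) (x : A) :
    P.ar (P.wa (P.ar x P.one) P.one) P.one = P.ar x P.one := by
  apply P.ax5
  · exact ord2 (mono_ar (ord2 (h1 P x P.one)) P.one)
  · exact h2 P (P.ar x P.one) P.one

end PseudoBCIAux

open PseudoBCIAux

theorem stmt1 {A : Type*} (P : PseudoBCI A) (x : A) :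
    P.IsAtom (P.phi x) ∧
    (P.InK (P.ar (P.phi x) x) ∧ P.InK (P.wa (P.phi x) x)) ∧
    (P.InK x → P.phi x = P.one) := by
  refine ⟨?_, ⟨?_, ?_⟩, ?_⟩
  · -- φ_x is an atom
    intro y h
    unfold PseudoBCI.le PseudoBCI.phi at *
    have a1 : P.ar (P.ar y P.one) (P.ar x P.one) = P.one := by
      have := mono_ar h P.one
      rw [m2] at this
      exact ord2 this
    have a2 : P.ar (P.ar x P.one) (P.ar y P.one) = P.one := by
      have t := P.ax1 (P.wa (P.ar x P.one) P.one) P.one y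
      rw [P.ax3, h, m2] at t
      exact le_trans (ord2 t) (wa_le_ar P y P.one)
    have a3 : P.ar y P.one = P.ar x P.one := P.ax5 _ _ a1 a2
    have a4 : P.ar y (P.wa (P.ar x P.one) P.one) = P.one := by
      have := h1 P y P.one
      rw [a3] at this
      exact ord2 this
    exact P.ax5 _ _ a4 h
  · -- φ_x → x ∈ K(A)
    unfold PseudoBCI.InK PseudoBCI.le PseudoBCI.phi
    have t := P.ax1 (P.wa (P.ar x P.one) P.one) x P.one
    rw [ord1 (h2 P (P.ar x P.one) P.one)] at t
    exact ord2 t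
  · -- φ_x ⇝ x ∈ K(A)
    unfold PseudoBCI.InK PseudoBCI.le PseudoBCI.phi
    have t := P.ax2 (P.wa (P.ar x P.one) P.one) x P.one
    rw [le_trans (wa_le_ar P x P.one) (h2 P (P.ar x P.one) P.one)] at t
    exact t
  · -- x ∈ K(A) implies φ_x = 1
    intro hx
    unfold PseudoBCI.InK PseudoBCI.le at hx
    unfold PseudoBCI.phi
    rw [hx, P.ax4]
end

section
/- Let (A, →, ⇝, 1) be a pseudo-BCI algebra and let d₁, d₂ be regular type II implicative derivations on A such that d₂ is idempotent (d₂ ∘ d₂ = d₂) and d₁(x) ≤ d₂(x) for all x ∈ A. Then d₂ ∘ d₁ = d₂. -/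
open PseudoBCI

namespace PseudoBCI

variable {A : Type*} (P : PseudoBCI A)

/-- `x ≤ (x→z)⇝z` (in ⇝-form). -/
lemma q1 (x z : A) : P.wa x (P.wa (P.ar x z) z) = P.one := by
  have h := P.ax1 P.one x z
  rwa [P.ax3, P.ax3] at h

/-- `x ≤ (x⇝z)→z`. -/
lemma q2 (x z : A) : P.ar x (P.ar (P.wa x z) z) = P.one := by
  have h := P.ax2 P.one x z
  rwa [P.ax4, P.ax3] at h

lemma ar_self (x : A) : P.ar x x = P.one := by
  have h := P.q2 P.one x
  rwa [P.ax3, P.ax4] at h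

lemma wa_self (x : A) : P.wa x x = P.one := by
  have h := P.q1 P.one x
  rwa [P.ax4, P.ax3] at h

lemma wa_of_ar {x y : A} (h : P.ar x y = P.one) : P.wa x y = P.one := by
  have h2 := P.q1 x y
  rwa [h, P.ax4] at h2

lemma ar_of_wa {x y : A} (h : P.wa x y = P.one) : P.ar x y = P.one := by
  have h2 := P.q2 x y
  rwa [h, P.ax3] at h2

/-- `x ≤ y → y→z ≤ x→z`. -/
lemma m1 {x y : A} (h : P.ar x y = P.one) (z : A) :
    P.ar (P.ar y z) (P.ar x z) = P.one := by
  have h2 := P.ax1 x y z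
  rw [h, P.ax4] at h2
  exact P.ar_of_wa h2

/-- `x ≤ y → z→x ≤ z→y`. -/
lemma p5ar {x y : A} (h : P.ar x y = P.one) (z : A) :
    P.ar (P.ar z x) (P.ar z y) = P.one := by
  have h2 := P.ax1 z x y
  rw [h, P.ax4] at h2
  exact P.ar_of_wa h2

/-- `x ≤ y → y⇝z ≤ x→z`. -/
lemma m2x {x y : A} (h : P.ar x y = P.one) (z : A) :
    P.ar (P.wa y z) (P.ar x z) = P.one := by
  have h2 := P.ax2 x y z
  rwa [P.wa_of_ar h, P.ax3] at h2

/-- `x ≤ y → z⇝x ≤ z→y`. -/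
lemma p5x {x y : A} (h : P.ar x y = P.one) (z : A) :
    P.ar (P.wa z x) (P.ar z y) = P.one := by
  have h2 := P.ax2 z x y
  rwa [P.wa_of_ar h, P.ax3] at h2

lemma le_trans' {x y z : A} (h1 : P.ar x y = P.one) (h2 : P.ar y z = P.one) :
    P.ar x z = P.one := by
  have h3 := P.m1 h1 z
  rwa [h2, P.ax3] at h3

/-- `x ≤ (x→z)→z`. -/
lemma p1ar (x z : A) : P.ar x (P.ar (P.ar x z) z) = P.one := by
  have h1 : P.ar x (P.wa (P.ar x z) z) = P.one := P.ar_of_wa (P.q1 x z)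
  have h2 : P.ar (P.wa (P.ar x z) z) (P.ar (P.ar x z) z) = P.one :=
    P.m2x (P.ar_self (P.ar x z)) z
  exact P.le_trans' h1 h2

section Deriv

variable {d : A → A}

/-- `x ≤ d x`. -/
lemma exp_deriv (hd : P.IsIDerII d) (hreg : d P.one = P.one) (x : A) :
    P.ar x (d x) = P.one := by
  have h := hd.1 P.one x
  rw [P.ax3, hreg, P.ax3] at h
  unfold cup2 at h
  rw [P.ax3] at h
  have h2 := P.q2 x (d x)
  rwa [← h] at h2

/-- Key: `d (x→y) = x → d y`. -/
lemma keyA (hd : P.IsIDerII d) (hreg : d P.one = P.one) (x y : A) :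
    d (P.ar x y) = P.ar x (d y) := by
  have hcol : P.wa (P.ar (d x) y) (P.ar x (d y)) = P.one := by
    apply P.wa_of_ar
    exact P.le_trans' (P.m1 (P.exp_deriv hd hreg x) y) (P.p5ar (P.exp_deriv hd hreg y) x)
  have h := hd.1 x y
  unfold cup2 at h
  rwa [hcol, P.ax3] at h

/-- `(d t → t) → t = d t`. -/
lemma x1 (hd : P.IsIDerII d) (hreg : d P.one = P.one) (t : A) :
    P.ar (P.ar (d t) t) t = d t := by
  set k := P.ar (d t) t with hk
  have h1 : P.ar (d t) (P.ar k t) = P.one := P.p1ar (d t) t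
  have h2 : P.ar (P.ar (P.ar k t) t) k = P.one := P.m1 h1 t
  have h3 : P.ar k (P.ar (P.ar k t) t) = P.one := P.p1ar k t
  have h4 : P.ar (P.ar k t) t = k := P.ax5 _ _ h2 h3
  have h5 : d (P.ar (P.ar k t) t) = P.ar (P.ar k t) (d t) := P.keyA hd hreg _ _
  have h6 : d k = P.one := by
    rw [hk, P.keyA hd hreg, P.ar_self]
  rw [h4, h6] at h5
  have h7 : P.ar (P.ar k t) (d t) = P.one := h5.symm
  exact P.ax5 _ _ h7 h1

/-- `d t ⇝ t = d t → t`. -/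
lemma x2 (hd : P.IsIDerII d) (hreg : d P.one = P.one) (t : A) :
    P.wa (d t) t = P.ar (d t) t := by
  have hA : P.ar (P.wa (d t) t) (P.ar (d t) t) = P.one := P.m2x (P.ar_self (d t)) t
  have hB : P.ar (P.ar (d t) t) (P.wa (d t) t) = P.one := by
    have h := P.q1 (P.ar (d t) t) t
    rw [P.x1 hd hreg] at h
    exact P.ar_of_wa h
  exact P.ax5 _ _ hA hB

/-- `(d t ⇝ t) → t = d t`. -/
lemma lb (hd : P.IsIDerII d) (hreg : d P.one = P.one) (t : A) :
    P.ar (P.wa (d t) t) t = d t := by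
  rw [P.x2 hd hreg, P.x1 hd hreg]

end Deriv

end PseudoBCI


theorem stmt5 {A : Type*} (P : PseudoBCI A) (d1 d2 : A → A)
    (hd1 : P.IsIDerII d1) (hreg1 : d1 P.one = P.one)
    (hd2 : P.IsIDerII d2) (hreg2 : d2 P.one = P.one)
    (hidem : d2 ∘ d2 = d2) (hle : ∀ x, P.le (d1 x) (d2 x)) :
    d2 ∘ d1 = d2 := by
  funext x
  simp only [Function.comp_apply]
  have hv : d2 (d2 x) = d2 x := congrFun hidem x
  -- Direction 1 : d2 x ≤ d2 (d1 x)
  have dir1 : P.ar (d2 x) (d2 (d1 x)) = P.one := by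
    set C := P.wa (d1 x) x with hC
    have hlb : P.ar C x = d1 x := P.lb hd1 hreg1 x
    have hu : d2 (d1 x) = P.ar C (d2 x) := by
      rw [← hlb, P.keyA hd2 hreg2]
    have hC1 : P.ar C P.one = P.one := by
      have h := P.p5x (P.exp_deriv hd1 hreg1 x) (d1 x)
      rwa [P.ar_self] at h
    have h := P.m1 hC1 (d2 x)
    rw [P.ax3] at h
    rw [hu]
    exact h
  -- Direction 2 : d2 (d1 x) ≤ d2 x
  have dir2 : P.ar (d2 (d1 x)) (d2 x) = P.one := by
    set B := P.wa (d2 x) x with hB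
    have hlb : P.ar B x = d2 x := P.lb hd2 hreg2 x
    have hd1v : d1 (d2 x) = d2 x := by
      apply P.ax5
      · have h := hle (d2 x)
        unfold PseudoBCI.le at h
        rwa [hv] at h
      · exact P.exp_deriv hd1 hreg1 (d2 x)
    have step1 : P.ar B (d1 x) = d2 x := by
      have h := P.keyA hd1 hreg1 B x
      rw [hlb, hd1v] at h
      exact h.symm
    have step2 : P.ar B (d2 (d1 x)) = d2 x := by
      have h := P.keyA hd2 hreg2 B (d1 x)
      rw [step1, hv] at h
      exact h.symm
    have hB1 : P.ar B P.one = P.one := by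
      have h := P.p5x (P.exp_deriv hd2 hreg2 x) (d2 x)
      rwa [P.ar_self] at h
    have h := P.m1 hB1 (d2 (d1 x))
    rw [P.ax3, step2] at h
    exact h
  exact P.ax5 _ _ dir2 dir1
end

section
/- Let (A, →, ⇝, 1) be a p-semisimple pseudo-BCI algebra and let d₁, d₂ be implicative derivations on A (maps that are both type I and type II implicative derivations). Then d₁(x) → d₂(x) = d₂(x) → d₁(x) and d₁(x) ⇝ d₂(x) = d₂(x) ⇝ d₁(x) for all x ∈ A. -/
open PseudoBCI

theorem stmt16 {A : Type*} (P : PseudoBCI A) (hss : P.PSemisimple)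
    (d1 d2 : A → A)
    (hd1 : P.IsIDerI d1 ∧ P.IsIDerII d1) (hd2 : P.IsIDerI d2 ∧ P.IsIDerII d2) :
    ∀ x, P.ar (d1 x) (d2 x) = P.ar (d2 x) (d1 x) ∧
      P.wa (d1 x) (d2 x) = P.wa (d2 x) (d1 x) := by
  have waRefl : ∀ x, P.wa x x = P.one := by
    intro x
    have h := P.ax1 P.one P.one x
    rwa [P.ax3, P.ax3, P.ax4] at h
  have arOfWa : ∀ x y, P.wa x y = P.one → P.ar x y = P.one := by
    intro x y h
    have h2 := P.ax2 x y y
    rwa [h, waRefl, P.ax3, P.ax3] at h2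
  have arRefl : ∀ x, P.ar x x = P.one := by
    intro x
    have h := P.ax2 P.one P.one x
    rwa [P.ax4, P.ax4, P.ax3, P.ax3] at h
  have PE : ∀ x y, P.ar x y = P.one → x = y := by
    intro x y h
    have h2 := P.ax1 x y x
    rw [h, P.ax4, arRefl] at h2
    have h3 := arOfWa _ _ h2
    exact P.ax5 x y h (hss _ h3)
  have PE' : ∀ x y, P.wa x y = P.one → x = y := fun x y h => PE x y (arOfWa x y h)
  have arEqWa : ∀ x y, P.ar x y = P.wa x y := by
    intro x y
    have h2 := P.ax2 x y y
    rw [waRefl, P.ax3] at h2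
    exact (PE _ _ h2).symm
  have cup2Eq : ∀ y z, P.cup2 y z = y := by
    intro y z
    have h2 := P.ax2 P.one y z
    rw [P.ax4, P.ax3] at h2
    exact (PE _ _ h2).symm
  have id1 : ∀ x y z, P.ar x y = P.ar (P.ar y z) (P.ar x z) := by
    intro x y z
    have h := PE' _ _ (P.ax1 x y z)
    rwa [← arEqWa] at h
  obtain ⟨hI1, hII1⟩ := hd1
  obtain ⟨hI2, hII2⟩ := hd2
  have hA1 : ∀ y, d1 y = P.ar (d1 P.one) y := by
    intro y
    have h := hII1.1 P.one y
    rwa [P.ax3, cup2Eq] at h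
  have hA2 : ∀ y, d2 y = P.ar (d2 P.one) y := by
    intro y
    have h := hII2.1 P.one y
    rwa [P.ax3, cup2Eq] at h
  have aOne : P.ar (d1 P.one) P.one = d1 P.one := (hA1 P.one).symm
  have bOne : P.ar (d2 P.one) P.one = d2 P.one := (hA2 P.one).symm
  have key : P.ar (d1 P.one) (d2 P.one) = P.ar (d2 P.one) (d1 P.one) := by
    have h := id1 (d1 P.one) (d2 P.one) P.one
    rwa [aOne, bOne] at h
  intro x
  have hgoal : P.ar (d1 x) (d2 x) = P.ar (d2 x) (d1 x) := by
    rw [hA1 x, hA2 x, ← id1 (d2 P.one) (d1 P.one) x,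
        ← id1 (d1 P.one) (d2 P.one) x]
    exact key.symm
  exact ⟨hgoal, by rw [← arEqWa, ← arEqWa]; exact hgoal⟩
end
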